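/- Let g₁, g₂ be real numbers with 0 < g₂² < g₁², and define the bilinear form ⟨X,Y⟩ := tr(X·Y) − (1/3)·(1 − g₁²/g₂²)·tr(X)·tr(Y) on 3×3 complex matrices. Then for every Hermitian 3×3 complex matrix X ≠ 0, the value ⟨X,X⟩ is a real number and ⟨X,X⟩ > 0. -/

import Mathlib

/-!
For Hermitian `X`, `tr (X * X) = tr (Xᴴ * X)` is the squared Frobenius norm, positive when
`X ≠ 0`, and `tr X` is real, so `(tr X)² ≥ 0`. Since `g₁² / g₂² > 1`, the form equals
`tr (X * X) + (g₁² / g₂² - 1) / 3 · (tr X)²`, which is positive in the star order of `ℂ`,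
i.e. a positive real.
-/

open scoped ComplexOrder

namespace Matrix.IsHermitian

variable {𝕜 n : Type*} [RCLike 𝕜] [Fintype n] {X : Matrix n n 𝕜}

theorem trace_mul_self_pos (hX : X.IsHermitian) (hX0 : X ≠ 0) : 0 < (X * X).trace := by
  nth_rw 1 [← hX.eq]
  exact (posSemidef_conjTranspose_mul_self X).trace_nonneg.lt_of_ne'
    (trace_conjTranspose_mul_self_eq_zero_iff.not.mpr hX0)

theorem isSelfAdjoint_trace (hX : X.IsHermitian) : IsSelfAdjoint X.trace := by
  rw [IsSelfAdjoint, ← trace_conjTranspose, hX.eq]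

theorem trace_mul_trace_nonneg (hX : X.IsHermitian) : 0 ≤ X.trace * X.trace := by
  simpa only [hX.isSelfAdjoint_trace.star_eq] using star_mul_self_nonneg X.trace

end Matrix.IsHermitian

/-- For real parameters `g₁, g₂` with `0 < g₂² < g₁²`, the bilinear form
`⟨X,Y⟩ = tr(XY) - (1/3)(1 - g₁²/g₂²) tr(X) tr(Y)` is positive definite on
Hermitian `3 × 3` complex matrices. -/
theorem inner_product_pos_def (g₁ g₂ : ℝ) (h₂ : 0 < g₂ ^ 2) (h₁₂ : g₂ ^ 2 < g₁ ^ 2)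
    (X : Matrix (Fin 3) (Fin 3) ℂ) (hX : X.IsHermitian) (hX0 : X ≠ 0) :
    ∃ r : ℝ,
      Matrix.trace (X * X)
          - (1 / 3 : ℂ) * ((1 : ℂ) - (g₁ : ℂ) ^ 2 / (g₂ : ℂ) ^ 2)
            * Matrix.trace X * Matrix.trace X = (r : ℂ) ∧ 0 < r := by
  have hc : 0 < (g₁ ^ 2 / g₂ ^ 2 - 1) / 3 := by
    linarith [(one_lt_div h₂).mpr h₁₂]
  obtain ⟨r, hr, hr_eq⟩ := RCLike.pos_iff_exists_ofReal.mp <|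
    add_pos_of_pos_of_nonneg (hX.trace_mul_self_pos hX0)
      (mul_nonneg (Complex.zero_le_real.mpr hc.le) hX.trace_mul_trace_nonneg)
  refine ⟨r, .trans ?_ hr_eq.symm, hr⟩
  push_cast
  ring
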